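/- For integers n \ge 1 and k \ge 1, J_n^k = J_n^{k-1} + \sum_{s=0}^{n-1} \binom{n}{s} J_s^{k-1} J_{n-s}^0. -/

import Mathlib

open Finset

/-- Stirling numbers of the second kind. -/
def stirling2 : ℕ → ℕ → ℕ
  | 0, 0 => 1
  | 0, _ + 1 => 0
  | _ + 1, 0 => 0
  | n + 1, k + 1 => (k + 1) * stirling2 n (k + 1) + stirling2 n k

/-- Fubini numbers: number of preferential arrangements of an n-set. -/
def fubini (n : ℕ) : ℕ := ∑ s ∈ range (n + 1), stirling2 n s * s.factorial

/-- Number of barred preferential arrangements of an n-set with m bars. -/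
def barred (n m : ℕ) : ℕ :=
  ∑ s ∈ range (n + 1), stirling2 n s * s.factorial * (m + s).choose m

/-- Number of restricted barred preferential arrangements. -/
def restrictedBarred (n m : ℕ) : ℕ :=
  ∑ s ∈ range (n + 1), n.choose s * m ^ s * fubini (n - s)

/-!
Write `J_n^m = ∑_s a(n,s) C(m+s,m)` with `a(n,s) = S(n,s) s!`, the number of surjections of an
`n`-set onto an `s`-set. Splitting a surjection onto `t + u` points by the preimage of the first
`t` of them gives `∑_i C(n,i) a(i,t) a(n-i,u) = a(n,t+u)` (by induction on `n` from
`a(n+1,s) = s (a(n,s) + a(n,s-1))`). Hence the binomial convolution of two sums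
`∑_s a(n,s) w(s)` is the sum for the convolution of the weights. For the weights `C(m+s,m)` and
`1` the hockey-stick identity `∑_{t ≤ s} C(m+t,m) = C(m+1+s,m+1)` turns this into
`J_n^{m+1} = ∑_i C(n,i) J_i^m J_{n-i}^0`, whose term `i = n` is `J_n^m`.
-/

theorem stirling2_eq_stirlingSecond : stirling2 = Nat.stirlingSecond := by
  funext n s
  fun_induction stirling2 n s <;> simp_all [Nat.stirlingSecond]

def orderedStirling2 (n s : ℕ) : ℕ := stirling2 n s * s.factorial

theorem orderedStirling2_eq_zero_of_lt {n s : ℕ} (h : n < s) : orderedStirling2 n s = 0 := by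
  simp [orderedStirling2, stirling2_eq_stirlingSecond, Nat.stirlingSecond_eq_zero_of_lt h]

theorem orderedStirling2_zero_left (s : ℕ) : orderedStirling2 0 s = if s = 0 then 1 else 0 := by
  cases s <;> simp [orderedStirling2, stirling2]

theorem orderedStirling2_succ_left (n s : ℕ) :
    orderedStirling2 (n + 1) s = s * (orderedStirling2 n s + orderedStirling2 n (s - 1)) := by
  cases s with
  | zero => simp [orderedStirling2, stirling2]
  | succ s =>
    simp only [orderedStirling2, stirling2, Nat.factorial_succ, Nat.add_sub_cancel]
    ring

theorem sum_antidiagonal_choose_mul_orderedStirling2 (n t u : ℕ) :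
    ∑ ij ∈ antidiagonal n, n.choose ij.1 * orderedStirling2 ij.1 t * orderedStirling2 ij.2 u =
      orderedStirling2 n (t + u) := by
  induction n generalizing t u with
  | zero => by_cases ht : t = 0 <;> simp [orderedStirling2_zero_left, ht]
  | succ n ih =>
    have hpascal := sum_antidiagonal_choose_succ_nsmul
      (fun i j => orderedStirling2 i t * orderedStirling2 j u) n
    simp only [smul_eq_mul, ← mul_assoc] at hpascal
    have hright : ∑ ij ∈ antidiagonal n,
        n.choose ij.1 * orderedStirling2 ij.1 t * orderedStirling2 (ij.2 + 1) u =
          u * (orderedStirling2 n (t + u) + orderedStirling2 n (t + (u - 1))) := by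
      rw [← ih, ← ih, ← sum_add_distrib, mul_sum]
      refine sum_congr rfl fun ij _ => ?_
      rw [orderedStirling2_succ_left]
      ring
    have hleft : ∑ ij ∈ antidiagonal n,
        n.choose ij.2 * orderedStirling2 (ij.1 + 1) t * orderedStirling2 ij.2 u =
          t * (orderedStirling2 n (t + u) + orderedStirling2 n (t - 1 + u)) := by
      rw [← ih, ← ih, ← sum_add_distrib, mul_sum]
      refine sum_congr rfl fun ij hij => ?_
      rw [orderedStirling2_succ_left, Nat.choose_symm_of_eq_add (mem_antidiagonal.mp hij).symm]
      ring
    rw [hpascal, hright, hleft, orderedStirling2_succ_left]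
    rcases t with _ | t <;> rcases u with _ | u <;>
      simp only [Nat.add_sub_cancel, Nat.add_succ_sub_one, zero_add, add_zero, zero_mul]
    rw [show t + (u + 1) = t + 1 + u by omega]
    ring

def weightedFubini (w : ℕ → ℕ) (n : ℕ) : ℕ :=
  ∑ s ∈ range (n + 1), orderedStirling2 n s * w s

theorem weightedFubini_eq_sum_range (w : ℕ → ℕ) {n N : ℕ} (h : n ≤ N) :
    weightedFubini w n = ∑ s ∈ range (N + 1), orderedStirling2 n s * w s := by
  refine sum_subset (range_subset_range.mpr (by omega)) fun s _ hs => ?_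
  rw [orderedStirling2_eq_zero_of_lt (by simpa using hs), zero_mul]

theorem sum_antidiagonal_choose_mul_weightedFubini (a b : ℕ → ℕ) (n : ℕ) :
    ∑ ij ∈ antidiagonal n, n.choose ij.1 * weightedFubini a ij.1 * weightedFubini b ij.2 =
      weightedFubini (fun s => ∑ tu ∈ antidiagonal s, a tu.1 * b tu.2) n := by
  have hexpand : ∀ ij ∈ antidiagonal n,
      n.choose ij.1 * weightedFubini a ij.1 * weightedFubini b ij.2 =
        ∑ t ∈ range (n + 1), ∑ u ∈ range (n + 1), a t * b u *
          (n.choose ij.1 * orderedStirling2 ij.1 t * orderedStirling2 ij.2 u) := fun ij hij => by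
    rw [weightedFubini_eq_sum_range a (HasAntidiagonal.antidiagonal.fst_le hij),
      weightedFubini_eq_sum_range b (HasAntidiagonal.antidiagonal.snd_le hij), mul_assoc,
      sum_mul_sum, mul_sum]
    exact sum_congr rfl fun t _ => by rw [mul_sum]; exact sum_congr rfl fun u _ => by ring
  calc _ = ∑ t ∈ range (n + 1), ∑ u ∈ range (n + 1),
          a t * b u * orderedStirling2 n (t + u) := by
        rw [sum_congr rfl hexpand, sum_comm]
        refine sum_congr rfl fun t _ => ?_
        rw [sum_comm]
        simp only [← mul_sum, sum_antidiagonal_choose_mul_orderedStirling2]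
    _ = ∑ t ∈ range (n + 1), ∑ u ∈ range (n + 1 - t),
          a t * b u * orderedStirling2 n (t + u) := by
        refine sum_congr rfl fun t ht => ?_
        refine (sum_subset (range_subset_range.mpr (by omega)) fun u _ hu => ?_).symm
        rw [orderedStirling2_eq_zero_of_lt (by simp at hu; omega), mul_zero]
    _ = ∑ s ∈ range (n + 1), ∑ t ∈ range (s + 1),
          a t * b (s - t) * orderedStirling2 n (t + (s - t)) :=
        (sum_range_diag_flip (n + 1) fun t u => a t * b u * orderedStirling2 n (t + u)).symm
    _ = _ := by
        refine sum_congr rfl fun s _ => ?_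
        dsimp only
        rw [Nat.sum_antidiagonal_eq_sum_range_succ (fun t u => a t * b u), mul_sum]
        refine sum_congr rfl fun t ht => ?_
        rw [Nat.add_sub_cancel' (by simpa [Nat.lt_succ_iff] using ht)]
        ring

theorem barred_eq_weightedFubini (n m : ℕ) :
    barred n m = weightedFubini (fun s => (m + s).choose m) n := rfl

theorem barred_zero_zero : barred 0 0 = 1 := rfl

theorem barred_succ (n m : ℕ) :
    barred n (m + 1) =
      ∑ ij ∈ antidiagonal n, n.choose ij.1 * barred ij.1 m * barred ij.2 0 := by
  simp only [barred_eq_weightedFubini, sum_antidiagonal_choose_mul_weightedFubini]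
  congr
  funext s
  rw [← Nat.sum_antidiagonal_swap]
  simp only [Prod.fst_swap, Prod.snd_swap, zero_add, Nat.choose_zero_right, mul_one,
    sum_antidiagonal_choose_add]
  rw [add_right_comm]

theorem barred_split_first_section_general (n k : ℕ) (hk : 1 ≤ k) :
    barred n k = barred n (k - 1) +
      ∑ s ∈ range n, n.choose s * barred s (k - 1) * barred (n - s) 0 := by
  obtain ⟨m, rfl⟩ : ∃ m, k = m + 1 := ⟨k - 1, by omega⟩
  rw [Nat.add_sub_cancel, barred_succ,
    Nat.sum_antidiagonal_eq_sum_range_succ (fun i j => n.choose i * barred i m * barred j 0),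
    sum_range_succ, Nat.choose_self, Nat.sub_self, barred_zero_zero, one_mul, mul_one, add_comm]

theorem barred_split_first_section (n k : ℕ) (hn : 1 ≤ n) (hk : 1 ≤ k) :
    barred n k = barred n (k - 1) +
      ∑ s ∈ range n, n.choose s * barred s (k - 1) * barred (n - s) 0 :=
  barred_split_first_section_general n k hk
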